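/- Let G be a group, A a finite generating set, and L an automatic (or more generally, any) language over A with π(L) = G consisting of λ-quasigeodesic words for some λ. If H ≤ G is a quasiconvex subset of Γ(G,A) (for a δ-hyperbolic Cayley graph), then H is L-quasiconvex: there is K > 0 such that for every w ∈ L with π(w) ∈ H and every prefix p of w, some word u of length at most K has π(pu) ∈ H. -/

import Mathlib

/-!
By the Morse lemma a `λ`-quasigeodesic word stays within a uniform distance `R` of a geodesic
word with the same endpoints, and quasiconvexity puts every prefix of that geodesic word within
`ε` of `H`; hence every prefix of the quasigeodesic word is within `R + ε` of `H`.

The Morse lemma holds for discrete paths in any four-point `δ`-hyperbolic space in which any two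
points are joined by a discrete geodesic. Bisection and slimness of triangles show that a path of
length `P` is `4δ log₂ P`-close to every geodesic with the same endpoints. Applied to a detour
around the point of the geodesic farthest from the quasigeodesic, this bounds that distance; a
discrete intermediate value argument then shows the quasigeodesic is close to the geodesic.
-/

def evalWord {A G : Type} [Group G] (a : A → G) (w : List A) : G :=
  (w.map a).prod

noncomputable def wlen {A G : Type} [Group G] (a : A → G) (g : G) : ℕ :=
  sInf {n | ∃ w : List A, evalWord a w = g ∧ w.length = n}

noncomputable def wdist {A G : Type} [Group G] (a : A → G) (g h : G) : ℕ :=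
  wlen a (g⁻¹ * h)

def FourPointHyperbolic {A G : Type} [Group G] (a : A → G) (δ : ℝ) : Prop :=
  ∀ x y z w : G, (wdist a x y : ℝ) + wdist a z w ≤
    max ((wdist a x z : ℝ) + wdist a y w) ((wdist a x w : ℝ) + wdist a y z) + 2 * δ

section DiscretePaths

variable {X : Type*}

section Append

variable {γ γ' : ℕ → X} {n m : ℕ}

def pathAppend (γ : ℕ → X) (n : ℕ) (γ' : ℕ → X) : ℕ → X :=
  fun k => if k ≤ n then γ k else γ' (k - n)

theorem pathAppend_apply_of_le {k : ℕ} (hk : k ≤ n) : pathAppend γ n γ' k = γ k :=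
  if_pos hk

theorem pathAppend_apply_of_ge (h : γ n = γ' 0) {k : ℕ} (hk : n ≤ k) :
    pathAppend γ n γ' k = γ' (k - n) := by
  unfold pathAppend
  split_ifs with hkn
  · rw [show k = n by omega, h, Nat.sub_self]
  · rfl

theorem forall_pathAppend {q : X → Prop} (h : γ n = γ' 0) (hγ : ∀ i ≤ n, q (γ i))
    (hγ' : ∀ j ≤ m, q (γ' j)) : ∀ k ≤ n + m, q (pathAppend γ n γ' k) := by
  intro k hk
  rcases le_total k n with hkn | hkn
  · rw [pathAppend_apply_of_le hkn]; exact hγ k hkn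
  · rw [pathAppend_apply_of_ge h hkn]; exact hγ' _ (by omega)

end Append

variable [PseudoMetricSpace X]

def IsDiscretePath (γ : ℕ → X) (n : ℕ) : Prop :=
  ∀ i < n, dist (γ i) (γ (i + 1)) ≤ 1

def IsDiscreteGeodesic (σ : ℕ → X) (n : ℕ) : Prop :=
  ∀ i j, i ≤ j → j ≤ n → dist (σ i) (σ j) = (j : ℝ) - i

def IsQuasiGeodesic (lam : ℝ) (γ : ℕ → X) (n : ℕ) : Prop :=
  ∀ i j, i ≤ j → j ≤ n → (j : ℝ) - i ≤ lam * dist (γ i) (γ j) + lam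

variable (X) in
def IsDiscreteGeodesicSpace : Prop :=
  ∀ x y : X, ∃ (σ : ℕ → X) (n : ℕ), σ 0 = x ∧ σ n = y ∧ IsDiscreteGeodesic σ n

variable {γ γ' σ : ℕ → X} {n m : ℕ}

namespace IsDiscretePath

theorem dist_le (hγ : IsDiscretePath γ n) {i j : ℕ} (hij : i ≤ j) (hj : j ≤ n) :
    dist (γ i) (γ j) ≤ (j : ℝ) - i := by
  induction j, hij using Nat.le_induction with
  | base => simp
  | succ j hij ih =>
    calc dist (γ i) (γ (j + 1)) ≤ dist (γ i) (γ j) + dist (γ j) (γ (j + 1)) :=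
          dist_triangle _ _ _
      _ ≤ ((j : ℝ) - i) + 1 := add_le_add (ih (by omega)) (hγ j (by omega))
      _ = ((j + 1 : ℕ) : ℝ) - i := by push_cast; ring

theorem mono (hγ : IsDiscretePath γ n) (hm : m ≤ n) : IsDiscretePath γ m :=
  fun i hi => hγ i (by omega)

theorem comp_add (hγ : IsDiscretePath γ n) {k : ℕ} (h : k + m ≤ n) :
    IsDiscretePath (fun s => γ (k + s)) m :=
  fun i hi => hγ (k + i) (by omega)

theorem comp_sub (hγ : IsDiscretePath γ n) {k : ℕ} (hk : k ≤ n) (hm : m ≤ k) :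
    IsDiscretePath (fun s => γ (k - s)) m := by
  intro i hi
  simp only
  rw [dist_comm, show k - i = k - (i + 1) + 1 by omega]
  exact hγ _ (by omega)

theorem append (hγ : IsDiscretePath γ n) (hγ' : IsDiscretePath γ' m) (h : γ n = γ' 0) :
    IsDiscretePath (pathAppend γ n γ') (n + m) := by
  intro i hi
  rcases lt_or_ge i n with hin | hin
  · rw [pathAppend_apply_of_le hin.le, pathAppend_apply_of_le hin]
    exact hγ i hin
  · rw [pathAppend_apply_of_ge h hin, pathAppend_apply_of_ge h (by omega),
      show i + 1 - n = i - n + 1 by omega]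
    exact hγ' _ (by omega)

theorem isDiscreteGeodesic (hγ : IsDiscretePath γ n) (h : dist (γ 0) (γ n) = n) :
    IsDiscreteGeodesic γ n := by
  intro i j hij hj
  have h0i := hγ.dist_le (Nat.zero_le i) (hij.trans hj)
  have hjn := hγ.dist_le hj le_rfl
  have hle := hγ.dist_le hij hj
  have htri : dist (γ 0) (γ n) ≤ dist (γ 0) (γ i) + dist (γ i) (γ j) + dist (γ j) (γ n) :=
    dist_triangle4 _ _ _ _
  push_cast at h0i
  linarith

end IsDiscretePath

namespace IsDiscreteGeodesic

theorem isDiscretePath (hσ : IsDiscreteGeodesic σ n) : IsDiscretePath σ n := fun i hi => by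
  rw [hσ i (i + 1) (by omega) hi]
  push_cast
  linarith

theorem dist_endpoints (hσ : IsDiscreteGeodesic σ n) : dist (σ 0) (σ n) = n := by
  simpa using hσ 0 n (Nat.zero_le n) le_rfl

theorem dist_add_dist (hσ : IsDiscreteGeodesic σ n) {j : ℕ} (hj : j ≤ n) :
    dist (σ 0) (σ j) + dist (σ j) (σ n) = dist (σ 0) (σ n) := by
  rw [hσ 0 j (Nat.zero_le j) hj, hσ j n hj le_rfl, hσ 0 n (Nat.zero_le n) le_rfl]
  ring

theorem comp_add (hσ : IsDiscreteGeodesic σ n) {k : ℕ} (h : k + m ≤ n) :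
    IsDiscreteGeodesic (fun s => σ (k + s)) m := by
  intro i j hij hj
  simp only
  rw [hσ (k + i) (k + j) (by omega) (by omega)]
  push_cast
  ring

theorem reverse (hσ : IsDiscreteGeodesic σ n) : IsDiscreteGeodesic (fun s => σ (n - s)) n := by
  intro i j hij hj
  simp only
  rw [dist_comm, hσ (n - j) (n - i) (by omega) (by omega), Nat.cast_sub (by omega),
    Nat.cast_sub (by omega)]
  ring

theorem length_le (hσ : IsDiscreteGeodesic σ n) (hγ : IsDiscretePath γ m) (h0 : σ 0 = γ 0)
    (hn : σ n = γ m) : n ≤ m := by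
  have := hγ.dist_le (Nat.zero_le m) le_rfl
  rw [← h0, ← hn, hσ.dist_endpoints] at this
  exact_mod_cast (by linarith : (n : ℝ) ≤ m)

theorem exists_eq_of_length_le_one (hσ : IsDiscreteGeodesic σ n) (hγ : IsDiscretePath γ m)
    (hm : m ≤ 1) (h0 : σ 0 = γ 0) (hn : σ n = γ m) {t : ℕ} (ht : t ≤ n) :
    ∃ k ≤ m, σ t = γ k := by
  have := hσ.length_le hγ h0 hn
  rcases Nat.eq_zero_or_pos t with rfl | htpos
  · exact ⟨0, Nat.zero_le m, h0⟩
  · exact ⟨m, le_rfl, by rw [show t = n by omega, hn]⟩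

end IsDiscreteGeodesic

end DiscretePaths

section Hyperbolic

variable {X : Type*} [PseudoMetricSpace X] {δ : ℝ}

noncomputable def gromovProduct (p x y : X) : ℝ :=
  (dist p x + dist p y - dist x y) / 2

variable (X) in
def GromovHyperbolic (δ : ℝ) : Prop :=
  ∀ x y z w : X, dist x y + dist z w ≤
    max (dist x z + dist y w) (dist x w + dist y z) + 2 * δ

theorem gromovProduct_le_dist (p x y : X) : gromovProduct p x y ≤ dist p y := by
  have := dist_triangle p y x
  rw [dist_comm y x] at this
  rw [gromovProduct]
  linarith

theorem gromovProduct_add_gromovProduct (x y z : X) :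
    gromovProduct x y z + gromovProduct y x z = dist x y := by
  rw [gromovProduct, gromovProduct, dist_comm y x]
  ring

namespace GromovHyperbolic

theorem nonneg (hX : GromovHyperbolic X δ) (x : X) : 0 ≤ δ := by
  have := hX x x x x
  simp only [dist_self, add_zero, max_self, zero_add] at this
  linarith

theorem min_gromovProduct_le (hX : GromovHyperbolic X δ) (p x y t : X) :
    min (gromovProduct p x t) (gromovProduct p t y) - δ ≤ gromovProduct p x y := by
  have h := hX x y p t
  rw [dist_comm x p, dist_comm y p] at h
  rw [gromovProduct, gromovProduct, gromovProduct, dist_comm t y]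
  rcases le_total (dist p x + dist y t) (dist x t + dist p y) with hm | hm
  · rw [max_eq_right hm] at h
    linarith [min_le_left ((dist p x + dist p t - dist x t) / 2)
      ((dist p t + dist p y - dist y t) / 2)]
  · rw [max_eq_left hm] at h
    linarith [min_le_right ((dist p x + dist p t - dist x t) / 2)
      ((dist p t + dist p y - dist y t) / 2)]

theorem dist_le_of_le_gromovProduct (hX : GromovHyperbolic X δ) {p y z m m' : X} {t : ℝ}
    (hm : dist p m = t) (hmy : dist m y = dist p y - t) (hm' : dist p m' = t)
    (hm'z : dist m' z = dist p z - t) (ht : t ≤ gromovProduct p y z) :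
    dist m m' ≤ 4 * δ := by
  have hδ := hX.nonneg p
  have hmy' : gromovProduct p m y = t := by rw [gromovProduct, hm, hmy]; ring
  have hzm' : gromovProduct p z m' = t := by rw [gromovProduct, hm', dist_comm z m', hm'z]; ring
  have hmz : t - δ ≤ gromovProduct p m z := by
    simpa [hmy', min_eq_left ht] using hX.min_gromovProduct_le p m z y
  have hmm' : t - 2 * δ ≤ gromovProduct p m m' := by
    have := hX.min_gromovProduct_le p m m' z
    rw [hzm'] at this
    rcases min_cases (gromovProduct p m z) t with ⟨h, _⟩ | ⟨h, _⟩ <;> rw [h] at this <;> linarith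
  rw [gromovProduct, hm, hm'] at hmm'
  linarith

variable {σ α β : ℕ → X} {ℓ m l : ℕ}

theorem dist_apply_le_of_le_gromovProduct (hX : GromovHyperbolic X δ)
    (hσ : IsDiscreteGeodesic σ ℓ) (hα : IsDiscreteGeodesic α m) (h0 : σ 0 = α 0) {t : ℕ}
    (ht : t ≤ ℓ) (htm : (t : ℝ) ≤ gromovProduct (σ 0) (σ ℓ) (α m)) :
    t ≤ m ∧ dist (σ t) (α t) ≤ 4 * δ := by
  have htm' : t ≤ m := by
    have := htm.trans (gromovProduct_le_dist _ _ _)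
    rw [h0, hα.dist_endpoints] at this
    exact_mod_cast this
  refine ⟨htm', hX.dist_le_of_le_gromovProduct (p := σ 0) ?_ ?_ ?_ ?_ htm⟩
  · simpa using hσ 0 t (Nat.zero_le t) ht
  · rw [hσ t ℓ ht le_rfl, hσ.dist_endpoints]
  · rw [h0]; simpa using hα 0 t (Nat.zero_le t) htm'
  · rw [h0, hα t m htm' le_rfl, hα.dist_endpoints]

theorem exists_dist_le_of_triangle (hX : GromovHyperbolic X δ) (hσ : IsDiscreteGeodesic σ ℓ)
    (hα : IsDiscreteGeodesic α m) (hβ : IsDiscreteGeodesic β l) (hσα : σ 0 = α 0)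
    (hαβ : α m = β 0) (hβσ : β l = σ ℓ) {t : ℕ} (ht : t ≤ ℓ) :
    (∃ j ≤ m, dist (σ t) (α j) ≤ 4 * δ) ∨ ∃ j ≤ l, dist (σ t) (β j) ≤ 4 * δ := by
  by_cases hyz : (t : ℝ) ≤ gromovProduct (σ 0) (σ ℓ) (α m)
  · obtain ⟨htm, hd⟩ := hX.dist_apply_le_of_le_gromovProduct hσ hα hσα ht hyz
    exact Or.inl ⟨t, htm, hd⟩
  · have hxz : ((ℓ - t : ℕ) : ℝ) ≤ gromovProduct (σ ℓ) (σ 0) (β 0) := by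
      have := gromovProduct_add_gromovProduct (σ 0) (σ ℓ) (β 0)
      rw [hσ.dist_endpoints, ← hαβ] at this
      rw [← hαβ]
      push_cast [ht]
      linarith
    obtain ⟨-, hd⟩ := hX.dist_apply_le_of_le_gromovProduct hσ.reverse hβ.reverse
      (by simp [hβσ]) (Nat.sub_le ℓ t) (by simpa using hxz)
    refine Or.inr ⟨l - (ℓ - t), Nat.sub_le _ _, ?_⟩
    simpa [Nat.sub_sub_self ht] using hd

/-- Bisect `γ` and use that geodesic triangles are `4δ`-slim. -/
theorem exists_dist_le_of_isDiscretePath (hX : GromovHyperbolic X δ)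
    (hgeod : IsDiscreteGeodesicSpace X) (N : ℕ) {γ σ : ℕ → X} {n ℓ : ℕ}
    (hγ : IsDiscretePath γ n) (hn : n ≤ 2 ^ N) (hσ : IsDiscreteGeodesic σ ℓ) (h0 : σ 0 = γ 0)
    (hℓ : σ ℓ = γ n) {t : ℕ} (ht : t ≤ ℓ) : ∃ k ≤ n, dist (σ t) (γ k) ≤ 4 * δ * N := by
  induction N generalizing γ σ n ℓ t with
  | zero =>
    obtain ⟨k, hk, hσk⟩ := hσ.exists_eq_of_length_le_one hγ (by simpa using hn) h0 hℓ ht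
    exact ⟨k, hk, by simp [hσk]⟩
  | succ N ih =>
    rcases le_or_gt n 1 with hn1 | hn1
    · obtain ⟨k, hk, hσk⟩ := hσ.exists_eq_of_length_le_one hγ hn1 h0 hℓ ht
      have := hX.nonneg (γ 0)
      exact ⟨k, hk, by rw [hσk, dist_self]; positivity⟩
    set h := (n + 1) / 2
    have hpow : 2 ^ (N + 1) = 2 ^ N * 2 := pow_succ 2 N
    obtain ⟨α, m, hα0, hαm, hα⟩ := hgeod (γ 0) (γ h)
    obtain ⟨β, l, hβ0, hβl, hβ⟩ := hgeod (γ h) (γ n)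
    rcases hX.exists_dist_le_of_triangle hσ hα hβ (h0.trans hα0.symm) (hαm.trans hβ0.symm)
      (hβl.trans hℓ.symm) ht with ⟨j, hj, hd⟩ | ⟨j, hj, hd⟩
    · obtain ⟨k, hk, hdk⟩ := ih (hγ.mono (by omega)) (by omega) hα hα0 hαm hj
      refine ⟨k, by omega, ?_⟩
      calc dist (σ t) (γ k) ≤ dist (σ t) (α j) + dist (α j) (γ k) := dist_triangle _ _ _
        _ ≤ 4 * δ * (N + 1 : ℕ) := by push_cast; linarith
    · obtain ⟨k, hk, hdk⟩ := ih (hγ.comp_add (k := h) (m := n - h) (by omega)) (by omega) hβ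
        hβ0 (by simpa [Nat.add_sub_cancel' (show h ≤ n by omega)] using hβl) hj
      refine ⟨h + k, by omega, ?_⟩
      calc dist (σ t) (γ (h + k)) ≤ dist (σ t) (β j) + dist (β j) (γ (h + k)) :=
            dist_triangle _ _ _
        _ ≤ 4 * δ * (N + 1 : ℕ) := by push_cast; linarith

end GromovHyperbolic

end Hyperbolic

section QuasiGeodesics

variable {X : Type*} [PseudoMetricSpace X] {lam δ : ℝ} {γ σ : ℕ → X} {n ℓ : ℕ}

theorem le_two_mul_dist_of_dist_add_dist_eq {c p q ψ : X} {D : ℝ}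
    (hψ : dist p ψ + dist ψ q = dist p q) (hpq : dist p q ≤ D) (hp : D ≤ dist c p)
    (hq : D ≤ dist c q) : D ≤ 2 * dist c ψ := by
  have := dist_triangle c ψ p
  have := dist_triangle c ψ q
  rw [dist_comm ψ p] at *
  linarith

theorem exists_maximin (f : ℕ → ℕ → ℝ) (ℓ n : ℕ) :
    ∃ t₀ ≤ ℓ, ∃ D : ℝ, (∀ t ≤ ℓ, ∃ k ≤ n, f t k ≤ D) ∧ ∀ k ≤ n, D ≤ f t₀ k := by
  have hn : (Finset.range (n + 1)).Nonempty := Finset.nonempty_range_add_one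
  have hℓ : (Finset.range (ℓ + 1)).Nonempty := Finset.nonempty_range_add_one
  set g : ℕ → ℝ := fun t => (Finset.range (n + 1)).inf' hn (f t)
  obtain ⟨t₀, ht₀, hmax⟩ := Finset.exists_mem_eq_sup' hℓ g
  refine ⟨t₀, by simpa [Nat.lt_succ_iff] using ht₀, g t₀, fun t ht => ?_,
    fun k hk => Finset.inf'_le _ (by simpa [Nat.lt_succ_iff] using hk)⟩
  obtain ⟨k, hk, hgk⟩ := Finset.exists_mem_eq_inf' hn (f t)
  refine ⟨k, by simpa [Nat.lt_succ_iff] using hk, ?_⟩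
  rw [← hgk, ← hmax]
  exact Finset.le_sup' g (by simpa [Nat.lt_succ_iff] using ht)

theorem exists_bound_of_two_pow_le (c b : ℝ) :
    ∃ N₀ : ℕ, ∀ N : ℕ, (2 : ℝ) ^ N ≤ c * N + b → N ≤ N₀ := by
  have hlin : (fun N : ℕ => c * (N : ℝ) + b) =o[Filter.atTop] fun N => (2 : ℝ) ^ N := by
    refine ((isLittleO_coe_const_pow_of_one_lt one_lt_two).const_mul_left c).add ?_
    refine Asymptotics.isLittleO_const_left.2 (Or.inr ?_)
    simpa [Function.comp_def] using tendsto_pow_atTop_atTop_of_one_lt (one_lt_two : (1 : ℝ) < 2)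
  obtain ⟨N₀, hN₀⟩ := Filter.eventually_atTop.1 (hlin.def (by norm_num : (0 : ℝ) < 1 / 2))
  refine ⟨N₀, fun N hN => ?_⟩
  by_contra! hlt
  have h := hN₀ N hlt.le
  rw [Real.norm_eq_abs, Real.norm_of_nonneg (by positivity)] at h
  linarith [le_abs_self (c * N + b), (by positivity : (0 : ℝ) < 2 ^ N)]

namespace IsQuasiGeodesic

theorem dist_le_of_le_of_le (hq : IsQuasiGeodesic lam γ n) (hγ : IsDiscretePath γ n)
    {i j k : ℕ} (hij : i ≤ j) (hjk : j ≤ k) (hk : k ≤ n) :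
    dist (γ i) (γ j) ≤ lam * dist (γ i) (γ k) + lam := by
  have := hq i k (hij.trans hjk) hk
  have := hγ.dist_le hij (hjk.trans hk)
  have : (j : ℝ) ≤ k := by exact_mod_cast hjk
  linarith

theorem dist_le_of_dist_left_le (hq : IsQuasiGeodesic lam γ n) (hγ : IsDiscretePath γ n)
    (hlam : 0 ≤ lam) {i k k' : ℕ} (hki : k ≤ i) (hik' : i ≤ k') (hk' : k' ≤ n) {x : X}
    {C D : ℝ} (hx : dist (γ k) x ≤ D) (hkk' : dist (γ k) (γ k') ≤ C) :
    dist (γ i) x ≤ lam * C + lam + D := by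
  have := hq.dist_le_of_le_of_le hγ hki hik' hk'
  have := mul_le_mul_of_nonneg_left hkk' hlam
  have := dist_triangle (γ i) (γ k) x
  rw [dist_comm (γ i) (γ k)] at this
  linarith

theorem exists_segment (hq : IsQuasiGeodesic lam γ n) (hγ : IsDiscretePath γ n) {k₁ k₂ : ℕ}
    (hk₁ : k₁ ≤ n) (hk₂ : k₂ ≤ n) :
    ∃ (μ : ℕ → X) (m : ℕ), μ 0 = γ k₁ ∧ μ m = γ k₂ ∧ IsDiscretePath μ m ∧
      (m : ℝ) ≤ lam * dist (γ k₁) (γ k₂) + lam ∧ ∀ s ≤ m, ∃ k ≤ n, μ s = γ k := by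
  rcases le_total k₁ k₂ with h | h
  · refine ⟨fun s => γ (k₁ + s), k₂ - k₁, by simp, by simp [Nat.add_sub_cancel' h],
      hγ.comp_add (by omega), ?_, fun s hs => ⟨k₁ + s, by omega, rfl⟩⟩
    have := hq k₁ k₂ h hk₂
    push_cast [h]
    linarith
  · refine ⟨fun s => γ (k₁ - s), k₁ - k₂, by simp, by simp [Nat.sub_sub_self h],
      hγ.comp_sub hk₁ (Nat.sub_le _ _), ?_, fun s hs => ⟨k₁ - s, by omega, rfl⟩⟩
    have := hq k₂ k₁ h hk₁
    rw [dist_comm]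
    push_cast [h]
    linarith

theorem exists_detour (hq : IsQuasiGeodesic lam γ n) (hγ : IsDiscretePath γ n)
    (hgeod : IsDiscreteGeodesicSpace X) {k₁ k₂ : ℕ} (hk₁ : k₁ ≤ n) (hk₂ : k₂ ≤ n) (p p' : X) :
    ∃ (P : ℕ → X) (L : ℕ), P 0 = p ∧ P L = p' ∧ IsDiscretePath P L ∧
      (L : ℝ) ≤ dist p (γ k₁) + (lam * dist (γ k₁) (γ k₂) + lam) + dist (γ k₂) p' ∧
      ∀ i ≤ L, dist p (P i) + dist (P i) (γ k₁) = dist p (γ k₁) ∨ (∃ k ≤ n, P i = γ k) ∨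
        dist (γ k₂) (P i) + dist (P i) p' = dist (γ k₂) p' := by
  obtain ⟨α, n₁, hα0, hαn, hα⟩ := hgeod p (γ k₁)
  obtain ⟨μ, m, hμ0, hμm, hμ, hm, hμγ⟩ := hq.exists_segment hγ hk₁ hk₂
  obtain ⟨β, n₂, hβ0, hβn, hβ⟩ := hgeod (γ k₂) p'
  have hαμ : α n₁ = μ 0 := hαn.trans hμ0.symm
  have hαμβ : pathAppend α n₁ μ (n₁ + m) = β 0 := by
    rw [pathAppend_apply_of_ge hαμ (by omega), Nat.add_sub_cancel_left, hμm, hβ0]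
  refine ⟨pathAppend (pathAppend α n₁ μ) (n₁ + m) β, n₁ + m + n₂, ?_, ?_,
    (hα.isDiscretePath.append hμ hαμ).append hβ.isDiscretePath hαμβ, ?_, ?_⟩
  · rw [pathAppend_apply_of_le (Nat.zero_le _), pathAppend_apply_of_le (Nat.zero_le _), hα0]
  · rw [pathAppend_apply_of_ge hαμβ (by omega), Nat.add_sub_cancel_left, hβn]
  · have h₁ := hα.dist_endpoints
    have h₂ := hβ.dist_endpoints
    rw [hα0, hαn] at h₁
    rw [hβ0, hβn] at h₂
    push_cast
    linarith
  · let q : X → Prop := fun ψ => dist p ψ + dist ψ (γ k₁) = dist p (γ k₁) ∨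
      (∃ k ≤ n, ψ = γ k) ∨ dist (γ k₂) ψ + dist ψ p' = dist (γ k₂) p'
    refine forall_pathAppend (q := q) hαμβ
      (forall_pathAppend (q := q) hαμ (fun i hi => ?_) (fun j hj => ?_)) (fun j hj => ?_)
    · refine Or.inl ?_
      rw [← hα0, ← hαn]
      exact hα.dist_add_dist hi
    · exact Or.inr (Or.inl (hμγ j hj))
    · refine Or.inr (Or.inr ?_)
      rw [← hβ0, ← hβn]
      exact hβ.dist_add_dist hj

theorem exists_far_detour (hq : IsQuasiGeodesic lam γ n) (hγ : IsDiscretePath γ n)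
    (hgeod : IsDiscreteGeodesicSpace X) (hlam : 0 ≤ lam) {c p p' : X} {k₁ k₂ : ℕ}
    (hk₁ : k₁ ≤ n) (hk₂ : k₂ ≤ n) {D : ℝ} (hp : dist p (γ k₁) ≤ D) (hp' : dist p' (γ k₂) ≤ D)
    (hfar : ∀ k ≤ n, D ≤ dist c (γ k)) (hcp : D ≤ dist c p) (hcp' : D ≤ dist c p') :
    ∃ (P : ℕ → X) (L : ℕ), P 0 = p ∧ P L = p' ∧ IsDiscretePath P L ∧
      (L : ℝ) ≤ 2 * D + lam * (2 * D + dist p p') + lam ∧ ∀ i ≤ L, D ≤ 2 * dist c (P i) := by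
  obtain ⟨P, L, hP0, hPL, hP, hL, hPpts⟩ := hq.exists_detour hγ hgeod hk₁ hk₂ p p'
  refine ⟨P, L, hP0, hPL, hP, ?_, fun i hi => ?_⟩
  · have h₁₂ : dist (γ k₁) (γ k₂) ≤ 2 * D + dist p p' := by
      have := dist_triangle4 (γ k₁) p p' (γ k₂)
      rw [dist_comm (γ k₁) p] at this
      linarith
    have := mul_le_mul_of_nonneg_left h₁₂ hlam
    rw [dist_comm] at hp'
    linarith
  · rcases hPpts i hi with h | ⟨k, hk, h⟩ | h
    · exact le_two_mul_dist_of_dist_add_dist_eq h hp hcp (hfar k₁ hk₁)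
    · rw [h]
      linarith [hfar k hk, dist_nonneg (x := c) (y := γ k)]
    · exact le_two_mul_dist_of_dist_add_dist_eq h (by rwa [dist_comm]) (hfar k₂ hk₂) hcp'

end IsQuasiGeodesic

end QuasiGeodesics

section Morse

variable {X : Type*} [PseudoMetricSpace X] {lam δ : ℝ} {γ σ : ℕ → X} {n ℓ : ℕ}

namespace GromovHyperbolic

/-- The quasigeodesic gives a detour from `σ (t₀ - ⌈D⌉)` to `σ (t₀ + ⌈D⌉)` of length linear in
`D` that stays `D / 2`-far from `σ t₀`, the point of the geodesic farthest from `γ`; so `D` is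
logarithmic in that length. -/
theorem exists_length_bound_of_farthest (hX : GromovHyperbolic X δ)
    (hgeod : IsDiscreteGeodesicSpace X) (hlam : 0 ≤ lam) (hγ : IsDiscretePath γ n)
    (hq : IsQuasiGeodesic lam γ n) (hσ : IsDiscreteGeodesic σ ℓ) (h0 : σ 0 = γ 0)
    (hℓ : σ ℓ = γ n) {t₀ : ℕ} (ht₀ : t₀ ≤ ℓ) {D : ℝ}
    (hD : ∀ t ≤ ℓ, ∃ k ≤ n, dist (σ t) (γ k) ≤ D) (hfar : ∀ k ≤ n, D ≤ dist (σ t₀) (γ k)) :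
    ∃ L : ℕ, (L : ℝ) ≤ (4 * lam + 2) * D + 3 * lam ∧ D ≤ 8 * δ * (Nat.log 2 L + 1) := by
  have hD0 : 0 ≤ D := let ⟨_, _, hk⟩ := hD 0 (Nat.zero_le ℓ); dist_nonneg.trans hk
  set r := ⌈D⌉₊
  set t₁ := t₀ - r
  set t₂ := min ℓ (t₀ + r)
  have ht₁ : t₁ ≤ t₀ := Nat.sub_le _ _
  have ht₂ : t₀ ≤ t₂ := le_min ht₀ (Nat.le_add_right _ _)
  have ht₂ℓ : t₂ ≤ ℓ := min_le_left _ _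
  have hfar₁ : D ≤ dist (σ t₀) (σ t₁) := by
    rcases le_total r t₀ with h | h
    · rw [dist_comm, hσ t₁ t₀ ht₁ ht₀, Nat.cast_sub h]
      linarith [Nat.le_ceil D]
    · rw [show t₁ = 0 by omega, h0]
      exact hfar 0 (Nat.zero_le n)
  have hfar₂ : D ≤ dist (σ t₀) (σ t₂) := by
    rcases le_total (t₀ + r) ℓ with h | h
    · rw [show t₂ = t₀ + r from min_eq_right h, hσ t₀ _ (by omega) h]
      push_cast
      linarith [Nat.le_ceil D]
    · rw [show t₂ = ℓ from min_eq_left h, hℓ]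
      exact hfar n le_rfl
  have h₁₂ : dist (σ t₁) (σ t₂) ≤ 2 * D + 2 := by
    rw [hσ t₁ t₂ (ht₁.trans ht₂) ht₂ℓ, ← Nat.cast_sub (ht₁.trans ht₂)]
    have : ((t₂ - t₁ : ℕ) : ℝ) ≤ 2 * r := by exact_mod_cast (by omega : t₂ - t₁ ≤ 2 * r)
    linarith [Nat.ceil_lt_add_one hD0]
  obtain ⟨k₁, hk₁, hd₁⟩ := hD t₁ (ht₁.trans ht₀)
  obtain ⟨k₂, hk₂, hd₂⟩ := hD t₂ ht₂ℓ
  obtain ⟨P, L, hP0, hPL, hP, hL, hfarP⟩ :=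
    hq.exists_far_detour hγ hgeod hlam hk₁ hk₂ hd₁ hd₂ hfar hfar₁ hfar₂
  obtain ⟨i, hi, hdi⟩ := hX.exists_dist_le_of_isDiscretePath hgeod (Nat.log 2 L + 1) hP
    (Nat.lt_pow_succ_log_self one_lt_two L).le (hσ.comp_add (k := t₁) (m := t₂ - t₁) (by omega))
    (by simpa using hP0.symm) (by simpa [Nat.add_sub_cancel' (ht₁.trans ht₂)] using hPL.symm)
    (t := t₀ - t₁) (by omega)
  refine ⟨L, ?_, ?_⟩
  · have := mul_le_mul_of_nonneg_left h₁₂ hlam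
    linarith
  · rw [Nat.add_sub_cancel' ht₁] at hdi
    have := hfarP i hi
    push_cast at hdi ⊢
    linarith

theorem exists_bound_geodesic_near_quasiGeodesic (hX : GromovHyperbolic X δ)
    (hgeod : IsDiscreteGeodesicSpace X) (hlam : 0 ≤ lam) :
    ∃ D₀ : ℝ, ∀ {γ σ : ℕ → X} {n ℓ : ℕ}, IsDiscretePath γ n → IsQuasiGeodesic lam γ n →
      IsDiscreteGeodesic σ ℓ → σ 0 = γ 0 → σ ℓ = γ n → ∀ t ≤ ℓ, ∃ k ≤ n, dist (σ t) (γ k) ≤ D₀ := by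
  set c := (4 * lam + 2) * (8 * δ)
  obtain ⟨N₀, hN₀⟩ := exists_bound_of_two_pow_le c (c + 3 * lam)
  refine ⟨8 * δ * (N₀ + 1), fun {γ σ n ℓ} hγ hq hσ h0 hℓ => ?_⟩
  obtain ⟨t₀, ht₀, D, hD, hfar⟩ := exists_maximin (fun t k => dist (σ t) (γ k)) ℓ n
  obtain ⟨L, hL, hDL⟩ := hX.exists_length_bound_of_farthest hgeod hlam hγ hq hσ h0 hℓ ht₀ hD hfar
  have hδ := hX.nonneg (σ 0)
  have hlog : Nat.log 2 L ≤ N₀ := by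
    rcases Nat.eq_zero_or_pos L with rfl | hL0
    · simp
    apply hN₀
    calc (2 : ℝ) ^ Nat.log 2 L ≤ L := by exact_mod_cast Nat.pow_log_le_self 2 hL0.ne'
      _ ≤ (4 * lam + 2) * D + 3 * lam := hL
      _ ≤ (4 * lam + 2) * (8 * δ * (Nat.log 2 L + 1)) + 3 * lam := by gcongr
      _ = c * (Nat.log 2 L : ℕ) + (c + 3 * lam) := by ring
  intro t ht
  obtain ⟨k, hk, hdk⟩ := hD t ht
  refine ⟨k, hk, hdk.trans (hDL.trans ?_)⟩
  gcongr

end GromovHyperbolic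

theorem exists_lt_apply_le_lt_apply_succ (f : ℕ → ℕ) {ℓ i : ℕ} (h0 : f 0 ≤ i) (hℓ : i < f ℓ) :
    ∃ t < ℓ, f t ≤ i ∧ i < f (t + 1) := by
  induction ℓ with
  | zero => omega
  | succ ℓ ih =>
    rcases lt_or_ge i (f ℓ) with h | h
    · obtain ⟨t, ht, hft⟩ := ih h
      exact ⟨t, by omega, hft⟩
    · exact ⟨ℓ, by omega, h, hℓ⟩

theorem GromovHyperbolic.exists_bound_quasiGeodesic_near_geodesic (hX : GromovHyperbolic X δ)
    (hgeod : IsDiscreteGeodesicSpace X) (hlam : 0 ≤ lam) :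
    ∃ R : ℝ, ∀ {γ σ : ℕ → X} {n ℓ : ℕ}, IsDiscretePath γ n → IsQuasiGeodesic lam γ n →
      IsDiscreteGeodesic σ ℓ → σ 0 = γ 0 → σ ℓ = γ n → ∀ i ≤ n, ∃ t ≤ ℓ, dist (γ i) (σ t) ≤ R := by
  obtain ⟨D, hD⟩ := hX.exists_bound_geodesic_near_quasiGeodesic hgeod hlam
  refine ⟨lam * (2 * D + 1) + lam + D, fun {γ σ n ℓ} hγ hq hσ h0 hℓ i hi => ?_⟩
  choose! f hfn hf using hD hγ hq hσ h0 hℓ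
  have hD0 : 0 ≤ D := dist_nonneg.trans (hf 0 (Nat.zero_le ℓ))
  rcases lt_or_ge i (f 0) with hi0 | hi0
  · refine ⟨0, Nat.zero_le ℓ, hq.dist_le_of_dist_left_le hγ hlam (Nat.zero_le i) hi0.le
      (hfn 0 (Nat.zero_le ℓ)) (by rw [h0, dist_self]; exact hD0) ?_⟩
    rw [← h0]
    linarith [hf 0 (Nat.zero_le ℓ)]
  rcases le_or_gt (f ℓ) i with hiℓ | hiℓ
  · have hfℓ : dist (γ (f ℓ)) (σ ℓ) ≤ D := by rw [dist_comm]; exact hf ℓ le_rfl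
    refine ⟨ℓ, le_rfl, hq.dist_le_of_dist_left_le hγ hlam hiℓ hi le_rfl hfℓ ?_⟩
    rw [← hℓ]
    linarith
  obtain ⟨t, htℓ, hft, hft'⟩ := exists_lt_apply_le_lt_apply_succ f hi0 hiℓ
  refine ⟨t, htℓ.le, hq.dist_le_of_dist_left_le hγ hlam hft hft'.le (hfn _ htℓ)
    (by rw [dist_comm]; exact hf t htℓ.le) ?_⟩
  calc dist (γ (f t)) (γ (f (t + 1)))
      ≤ dist (γ (f t)) (σ t) + dist (σ t) (σ (t + 1)) + dist (σ (t + 1)) (γ (f (t + 1))) :=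
        dist_triangle4 _ _ _ _
    _ ≤ D + 1 + D := by
        rw [dist_comm]
        gcongr
        · exact hf t htℓ.le
        · exact hσ.isDiscretePath t htℓ
        · exact hf (t + 1) htℓ
    _ = 2 * D + 1 := by ring

end Morse

section WordMetric

variable {A G : Type} [Group G] (a : A → G)

theorem evalWord_append (u v : List A) : evalWord a (u ++ v) = evalWord a u * evalWord a v := by
  simp [evalWord]

theorem wlen_le_length {w : List A} {g : G} (h : evalWord a w = g) : wlen a g ≤ w.length :=
  Nat.sInf_le ⟨w, h, rfl⟩

theorem exists_length_eq_wlen (hgen : ∀ g : G, ∃ w : List A, evalWord a w = g) (g : G) :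
    ∃ w : List A, evalWord a w = g ∧ w.length = wlen a g := by
  obtain ⟨w, hw⟩ := hgen g
  exact Nat.sInf_mem (s := {n | ∃ w : List A, evalWord a w = g ∧ w.length = n})
    ⟨w.length, w, hw, rfl⟩

theorem wlen_mul_le (hgen : ∀ g : G, ∃ w : List A, evalWord a w = g) (g h : G) :
    wlen a (g * h) ≤ wlen a g + wlen a h := by
  obtain ⟨u, hu, hul⟩ := exists_length_eq_wlen a hgen g
  obtain ⟨v, hv, hvl⟩ := exists_length_eq_wlen a hgen h
  calc wlen a (g * h) ≤ (u ++ v).length := wlen_le_length a (by rw [evalWord_append, hu, hv])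
    _ = wlen a g + wlen a h := by rw [List.length_append, hul, hvl]

theorem wlen_inv_le (hinv : ∀ x : A, ∃ y : A, a y = (a x)⁻¹)
    (hgen : ∀ g : G, ∃ w : List A, evalWord a w = g) (g : G) : wlen a g⁻¹ ≤ wlen a g := by
  choose ι hι using hinv
  obtain ⟨w, hw, hwl⟩ := exists_length_eq_wlen a hgen g
  calc wlen a g⁻¹ ≤ (w.reverse.map ι).length := wlen_le_length a (by
        rw [← hw]
        simp [evalWord, List.prod_inv_reverse, Function.comp_def, hι])
    _ = wlen a g := by simp [hwl]

theorem wlen_inv (hinv : ∀ x : A, ∃ y : A, a y = (a x)⁻¹)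
    (hgen : ∀ g : G, ∃ w : List A, evalWord a w = g) (g : G) : wlen a g⁻¹ = wlen a g :=
  le_antisymm (wlen_inv_le a hinv hgen g) (by simpa using wlen_inv_le a hinv hgen g⁻¹)

noncomputable abbrev wordPseudoMetric (hinv : ∀ x : A, ∃ y : A, a y = (a x)⁻¹)
    (hgen : ∀ g : G, ∃ w : List A, evalWord a w = g) : PseudoMetricSpace G where
  dist g h := wdist a g h
  dist_self g := by
    simpa [wdist] using wlen_le_length a (w := []) (g := 1) rfl
  dist_comm g h := by
    rw [wdist, wdist, ← wlen_inv a hinv hgen, mul_inv_rev, inv_inv]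
  dist_triangle g h k := by
    have : g⁻¹ * k = (g⁻¹ * h) * (h⁻¹ * k) := by group
    simp only [wdist, this]
    exact_mod_cast wlen_mul_le a hgen _ _

variable [PseudoMetricSpace G] {a} (hdist : ∀ g h : G, dist g h = wdist a g h)
include hdist

theorem isDiscretePath_mul_evalWord_take (x : G) (w : List A) :
    IsDiscretePath (fun k => x * evalWord a (w.take k)) w.length := by
  intro i hi
  have : (x * evalWord a (w.take i))⁻¹ * (x * evalWord a (w.take (i + 1))) = evalWord a [w[i]] := by
    rw [List.take_succ_eq_append_getElem hi, evalWord_append]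
    group
  rw [hdist, wdist, this]
  exact_mod_cast wlen_le_length a rfl

theorem isDiscreteGeodesic_mul_evalWord_take (x : G) {v : List A}
    (hv : v.length = wlen a (evalWord a v)) :
    IsDiscreteGeodesic (fun k => x * evalWord a (v.take k)) v.length := by
  refine (isDiscretePath_mul_evalWord_take hdist x v).isDiscreteGeodesic ?_
  have : (x * evalWord a (v.take 0))⁻¹ * (x * evalWord a (v.take v.length)) = evalWord a v := by
    simp [evalWord]
  rw [hdist, wdist, this, ← hv]

theorem isDiscreteGeodesicSpace (hgen : ∀ g : G, ∃ w : List A, evalWord a w = g) :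
    IsDiscreteGeodesicSpace G := by
  intro x y
  obtain ⟨v, hv, hvl⟩ := exists_length_eq_wlen a hgen (x⁻¹ * y)
  exact ⟨fun k => x * evalWord a (v.take k), v.length, by simp [evalWord], by simp [hv],
    isDiscreteGeodesic_mul_evalWord_take hdist x (by rw [hv, hvl])⟩

end WordMetric

theorem L_quasiconvex_of_quasiconvex_subset_general
    {A G : Type} [Group G] (a : A → G)
    (hinv : ∀ x : A, ∃ y : A, a y = (a x)⁻¹)
    (hgen : ∀ g : G, ∃ w : List A, evalWord a w = g)
    (δ : ℝ) (hhyp : FourPointHyperbolic a δ)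
    (L : Language A)
    (lam : ℝ) (hlam : 1 ≤ lam)
    (hquasi : ∀ w ∈ L, ∀ i j : ℕ, i ≤ j → j ≤ w.length →
      ((j : ℝ) - i) ≤ lam * wdist a (evalWord a (w.take i)) (evalWord a (w.take j)) + lam)
    (H : Subgroup G)
    (hqc : ∃ ε : ℝ, 0 < ε ∧ ∀ h : G, h ∈ H → ∀ w : List A, evalWord a w = h →
      w.length = wlen a h → ∀ p : List A, p <+: w →
        ∃ u : List A, (u.length : ℝ) ≤ ε ∧ evalWord a p * evalWord a u ∈ H) :
    ∃ K : ℕ, 0 < K ∧ ∀ w ∈ L, evalWord a w ∈ H → ∀ p : List A, p <+: w →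
      ∃ u : List A, u.length ≤ K ∧ evalWord a (p ++ u) ∈ H := by
  let _ : PseudoMetricSpace G := wordPseudoMetric a hinv hgen
  have hdist : ∀ g h : G, dist g h = wdist a g h := fun _ _ => rfl
  obtain ⟨R, hR⟩ := GromovHyperbolic.exists_bound_quasiGeodesic_near_geodesic (X := G)
    (δ := δ) hhyp (isDiscreteGeodesicSpace hdist hgen) (by linarith : (0 : ℝ) ≤ lam)
  obtain ⟨ε, -, hε⟩ := hqc
  refine ⟨max 1 ⌈R + ε⌉₊, by positivity, fun w hw hwH p hp => ?_⟩
  obtain ⟨v, hv, hvl⟩ := exists_length_eq_wlen a hgen (evalWord a w)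
  obtain ⟨t, -, ht⟩ := hR (γ := fun k => evalWord a (w.take k))
    (σ := fun k => evalWord a (v.take k))
    (by simpa using isDiscretePath_mul_evalWord_take hdist 1 w) (hquasi w hw)
    (by simpa using isDiscreteGeodesic_mul_evalWord_take hdist 1 (hvl.trans (congrArg _ hv.symm)))
    (by simp) (by simp [hv]) p.length hp.length_le
  obtain ⟨u', hu', hu'H⟩ := hε _ hwH v hv hvl (v.take t) (List.take_prefix t v)
  set g := evalWord a (v.take t) * evalWord a u'
  obtain ⟨u, hu, hul⟩ := exists_length_eq_wlen a hgen ((evalWord a p)⁻¹ * g)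
  refine ⟨u, ?_, by rwa [evalWord_append, hu, mul_inv_cancel_left]⟩
  have hpw : evalWord a p = evalWord a (w.take p.length) := by
    rw [← List.prefix_iff_eq_take.mp hp]
  have hu'g : dist (evalWord a (v.take t)) g ≤ ε := by
    rw [hdist, wdist, inv_mul_cancel_left]
    exact (Nat.cast_le.2 (wlen_le_length a rfl)).trans hu'
  have : (u.length : ℝ) ≤ ⌈R + ε⌉₊ := calc
    (u.length : ℝ) = dist (evalWord a p) g := by rw [hul]; rfl
    _ ≤ dist (evalWord a p) (evalWord a (v.take t)) + dist (evalWord a (v.take t)) g :=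
      dist_triangle _ _ _
    _ ≤ R + ε := add_le_add (by rwa [hpw]) hu'g
    _ ≤ ⌈R + ε⌉₊ := Nat.le_ceil _
  exact le_max_of_le_right (by exact_mod_cast this)

/-- If `L` consists of `λ`-quasigeodesic words and surjects onto the hyperbolic group `G`,
then every subgroup `H` that is quasiconvex as a subset of the Cayley graph is
`L`-quasiconvex. -/
theorem L_quasiconvex_of_quasiconvex_subset
    {A G : Type} [Fintype A] [Group G] (a : A → G)
    (hinv : ∀ x : A, ∃ y : A, a y = (a x)⁻¹)
    (hgen : ∀ g : G, ∃ w : List A, evalWord a w = g)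
    (δ : ℝ) (hδ : 0 ≤ δ) (hhyp : FourPointHyperbolic a δ)
    (L : Language A) (hsur : ∀ g : G, ∃ w ∈ L, evalWord a w = g)
    (lam : ℝ) (hlam : 1 ≤ lam)
    (hquasi : ∀ w ∈ L, ∀ i j : ℕ, i ≤ j → j ≤ w.length →
      ((j : ℝ) - i) ≤ lam * wdist a (evalWord a (w.take i)) (evalWord a (w.take j)) + lam)
    (H : Subgroup G)
    (hqc : ∃ ε : ℝ, 0 < ε ∧ ∀ h : G, h ∈ H → ∀ w : List A, evalWord a w = h →
      w.length = wlen a h → ∀ p : List A, p <+: w →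
        ∃ u : List A, (u.length : ℝ) ≤ ε ∧ evalWord a p * evalWord a u ∈ H) :
    ∃ K : ℕ, 0 < K ∧ ∀ w ∈ L, evalWord a w ∈ H → ∀ p : List A, p <+: w →
      ∃ u : List A, u.length ≤ K ∧ evalWord a (p ++ u) ∈ H :=
  L_quasiconvex_of_quasiconvex_subset_general a hinv hgen δ hhyp L lam hlam hquasi H hqc
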